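/- Let w be a word of length n ≥ 1 with last letter h = w_n. For any letter a, the word w·a avoids both patterns 1-11 and 1-22 if and only if w avoids both patterns and, in addition, either a ≠ h, or (a = h, h occurs only once in w, and no letter of w is strictly smaller than h). -/
import Mathlib


/-- `w` contains the generalized pattern 1-11: ∃ i < j < n with w i = w j = w (j+1). -/
def Contains111 {n m : ℕ} (w : Fin n → Fin m) : Prop :=
  ∃ i j k : Fin n, i < j ∧ (j : ℕ) + 1 = (k : ℕ) ∧ w i = w j ∧ w j = w k

/-- `w` contains the generalized pattern 1-22: ∃ i < j < n with w i < w j = w (j+1). -/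
def Contains122 {n m : ℕ} (w : Fin n → Fin m) : Prop :=
  ∃ i j k : Fin n, i < j ∧ (j : ℕ) + 1 = (k : ℕ) ∧ w i < w j ∧ w j = w k

theorem appending_avoids_111_122 {n m : ℕ} (hn : 1 ≤ n) (w : Fin n → Fin m) (a : Fin m)
    (h : Fin m) (hh : h = w ⟨n - 1, by omega⟩) :
    (¬ Contains111 (Fin.snoc w a) ∧ ¬ Contains122 (Fin.snoc w a)) ↔
      ((¬ Contains111 w ∧ ¬ Contains122 w) ∧
        (a ≠ h ∨
         (a = h ∧ (∃! i : Fin n, w i = h) ∧ ∀ i : Fin n, ¬ w i < h))) := by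
  constructor
  · rintro ⟨H1, H2⟩
    refine ⟨⟨?_, ?_⟩, ?_⟩
    · rintro ⟨i, j, k, hij, hjk, e1, e2⟩
      exact H1 ⟨i.castSucc, j.castSucc, k.castSucc, by simpa using hij,
        by simpa using hjk, by simpa using e1, by simpa using e2⟩
    · rintro ⟨i, j, k, hij, hjk, e1, e2⟩
      exact H2 ⟨i.castSucc, j.castSucc, k.castSucc, by simpa using hij,
        by simpa using hjk, by simpa using e1, by simpa using e2⟩
    · by_cases hah : a = h
      · right
        refine ⟨hah, ⟨⟨n - 1, by omega⟩, hh.symm, ?_⟩, ?_⟩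
        · intro y hy
          by_contra hne
          have hy1 : y.1 < n - 1 := by
            rcases lt_or_eq_of_le (Nat.le_of_lt_succ (by omega : y.1 < (n-1) + 1)) with h' | h'
            · exact h'
            · exact absurd (Fin.ext h') hne
          refine H1 ⟨y.castSucc, (⟨n - 1, by omega⟩ : Fin n).castSucc, Fin.last n,
            by simpa [Fin.lt_def] using hy1, by simp; omega, ?_, ?_⟩
          · simp only [Fin.snoc_castSucc]
            rw [hy, hh]
          · simp only [Fin.snoc_castSucc, Fin.snoc_last]
            rw [← hh, hah]
        · intro y hy
          have hy1 : y.1 < n - 1 := by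
            rcases lt_or_eq_of_le (Nat.le_of_lt_succ (by omega : y.1 < (n-1) + 1)) with h' | h'
            · exact h'
            · exfalso
              have : y = (⟨n - 1, by omega⟩ : Fin n) := Fin.ext h'
              rw [this, ← hh] at hy
              exact lt_irrefl _ hy
          refine H2 ⟨y.castSucc, (⟨n - 1, by omega⟩ : Fin n).castSucc, Fin.last n,
            by simpa [Fin.lt_def] using hy1, by simp; omega, ?_, ?_⟩
          · simp only [Fin.snoc_castSucc]
            rw [← hh]; exact hy
          · simp only [Fin.snoc_castSucc, Fin.snoc_last]
            rw [← hh, hah]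
      · left; exact hah
  · rintro ⟨⟨H1, H2⟩, hcond⟩
    constructor
    · rintro ⟨i, j, k, hij, hjk, e1, e2⟩
      have hk : k.1 ≤ n := by omega
      rcases lt_or_eq_of_le hk with hk' | hk'
      · have hj : j.1 < n := by omega
        have hi : i.1 < n := by omega
        rw [show i = (⟨i.1, hi⟩ : Fin n).castSucc from Fin.ext rfl,
            show j = (⟨j.1, hj⟩ : Fin n).castSucc from Fin.ext rfl] at e1
        rw [show j = (⟨j.1, hj⟩ : Fin n).castSucc from Fin.ext rfl,
            show k = (⟨k.1, hk'⟩ : Fin n).castSucc from Fin.ext rfl] at e2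
        simp only [Fin.snoc_castSucc] at e1 e2
        exact H1 ⟨⟨i.1, hi⟩, ⟨j.1, hj⟩, ⟨k.1, hk'⟩, Fin.mk_lt_mk.mpr hij, hjk, e1, e2⟩
      · have hjn : j.1 < n := by omega
        have hi : i.1 < n - 1 := by omega
        rw [show j = (⟨j.1, hjn⟩ : Fin n).castSucc from Fin.ext rfl,
            show i = (⟨i.1, by omega⟩ : Fin n).castSucc from Fin.ext rfl] at e1
        rw [show j = (⟨j.1, hjn⟩ : Fin n).castSucc from Fin.ext rfl,
            show k = Fin.last n from Fin.ext (hk'.trans (Fin.val_last n).symm)] at e2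
        simp only [Fin.snoc_castSucc, Fin.snoc_last] at e1 e2
        have hj1 : j.1 = n - 1 := by omega
        have hjh : w (⟨j.1, hjn⟩ : Fin n) = h := by
          rw [show (⟨j.1, hjn⟩ : Fin n) = ⟨n - 1, by omega⟩ from Fin.ext hj1, ← hh]
        rcases hcond with hne | ⟨hah, ⟨u, hu, huniq⟩, _⟩
        · exact hne (e2.symm.trans hjh)
        · have h1 : (⟨i.1, by omega⟩ : Fin n) = u := huniq _ (e1.trans hjh)
          have h2 : (⟨n - 1, by omega⟩ : Fin n) = u := huniq _ hh.symm
          have : i.1 = n - 1 := by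
            have := congrArg Fin.val (h1.trans h2.symm)
            simpa using this
          omega
    · rintro ⟨i, j, k, hij, hjk, e1, e2⟩
      have hk : k.1 ≤ n := by omega
      rcases lt_or_eq_of_le hk with hk' | hk'
      · have hj : j.1 < n := by omega
        have hi : i.1 < n := by omega
        rw [show i = (⟨i.1, hi⟩ : Fin n).castSucc from Fin.ext rfl,
            show j = (⟨j.1, hj⟩ : Fin n).castSucc from Fin.ext rfl] at e1
        rw [show j = (⟨j.1, hj⟩ : Fin n).castSucc from Fin.ext rfl,
            show k = (⟨k.1, hk'⟩ : Fin n).castSucc from Fin.ext rfl] at e2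
        simp only [Fin.snoc_castSucc] at e1 e2
        exact H2 ⟨⟨i.1, hi⟩, ⟨j.1, hj⟩, ⟨k.1, hk'⟩, Fin.mk_lt_mk.mpr hij, hjk, e1, e2⟩
      · have hjn : j.1 < n := by omega
        have hi : i.1 < n - 1 := by omega
        rw [show j = (⟨j.1, hjn⟩ : Fin n).castSucc from Fin.ext rfl,
            show i = (⟨i.1, by omega⟩ : Fin n).castSucc from Fin.ext rfl] at e1
        rw [show j = (⟨j.1, hjn⟩ : Fin n).castSucc from Fin.ext rfl,
            show k = Fin.last n from Fin.ext (hk'.trans (Fin.val_last n).symm)] at e2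
        simp only [Fin.snoc_castSucc, Fin.snoc_last] at e1 e2
        have hj1 : j.1 = n - 1 := by omega
        have hjh : w (⟨j.1, hjn⟩ : Fin n) = h := by
          rw [show (⟨j.1, hjn⟩ : Fin n) = ⟨n - 1, by omega⟩ from Fin.ext hj1, ← hh]
        rcases hcond with hne | ⟨hah, _, hnolt⟩
        · exact hne (e2.symm.trans hjh)
        · exact hnolt _ (lt_of_lt_of_eq e1 hjh)
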